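/- arXiv:2209.05119 — 6 statements merged into one kernel-verified Lean document; each statement's English description precedes it below -/
import Mathlib

section
/- For any integers p > s ≥ 2, any strictly increasing injection h : {0,...,s-1} → {0,...,p-1}, and any positive integer n with s-ary expansion n = Σ_{i=0}^k ε_i s^i, define a_n = Σ_{i=0}^k h(ε_i) p^i. Then there exist constants 0 < c₁ ≤ c₂ such that c₁ ≤ a_n / n^{log_s p} ≤ c₂ for all n ≥ 1; that is, the growth order of a_n is n^{log_s p}. -/
/-!
Let `k` be the number of `s`-ary digits of `n`, so `s ^ (k - 1) ≤ n < s ^ k`. Raising to the power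
`α = log_s p` turns powers of `s` into powers of `p`, hence `p ^ (k - 1) ≤ n ^ α ≤ p ^ k`.
On the other hand `a_n` has exactly `k` digits in base `p`, its leading digit `h(ε_k)` being
nonzero because `h(ε_k) > h(0) ≥ 0`, so also `p ^ (k - 1) ≤ a_n < p ^ k`.
Hence `1 / p ≤ a_n / n ^ α ≤ p`.
-/

open Real Filter Set MeasureTheory Topology
open scoped Classical ENNReal

/-- The Cantor-integer function: apply the digit map `h` to the `s`-ary digits of `n`
and read the result in base `p`. -/
def cantorInt (p s : ℕ) (h : ℕ → ℕ) (n : ℕ) : ℕ :=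
  (Nat.digits s n).foldr (fun d acc => h d + p * acc) 0

/-- `b n = a n / n ^ (log_s p)`. -/
noncomputable def cantorB (p s : ℕ) (h : ℕ → ℕ) (n : ℕ) : ℝ :=
  (cantorInt p s h n : ℝ) / (n : ℝ) ^ Real.logb s p

/-- `a(x) = a_⌊x⌋`. -/
noncomputable def cantorA (p s : ℕ) (h : ℕ → ℕ) (x : ℝ) : ℝ :=
  (cantorInt p s h ⌊x⌋₊ : ℝ)

lemma List.foldr_add_mul_eq_ofDigits (p : ℕ) (h : ℕ → ℕ) (l : List ℕ) :
    l.foldr (fun d acc => h d + p * acc) 0 = Nat.ofDigits p (l.map h) := by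
  induction l with
  | nil => simp
  | cons d l ih => simp [Nat.ofDigits_cons, ih]

lemma Real.pow_rpow_logb {b x : ℝ} (hb : 0 < b) (hb1 : b ≠ 1) (hx : 0 < x) (m : ℕ) :
    (b ^ m) ^ logb b x = x ^ m := by
  rw [← rpow_pow_comm hb.le, rpow_logb hb hb1 hx]

section RpowLogb

variable {s : ℕ} {x : ℝ}

lemma natCast_rpow_logb_le_pow_length_digits (hs : 1 < s) (hx : 1 ≤ x) (n : ℕ) :
    (n : ℝ) ^ logb s x ≤ x ^ (Nat.digits s n).length := by
  have hsR : (1 : ℝ) < s := by exact_mod_cast hs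
  rw [← pow_rpow_logb (by positivity) hsR.ne' (by positivity)]
  gcongr
  · exact logb_nonneg hsR hx
  · exact_mod_cast (Nat.lt_base_pow_length_digits hs).le

lemma pow_length_digits_le_mul_natCast_rpow_logb (hs : 1 < s) (hx : 1 ≤ x) {n : ℕ} (hn : n ≠ 0) :
    x ^ (Nat.digits s n).length ≤ x * (n : ℝ) ^ logb s x := by
  have hsR : (1 : ℝ) < s := by exact_mod_cast hs
  have hx0 : 0 < x := by positivity
  calc x ^ (Nat.digits s n).length
      = ((s : ℝ) ^ (Nat.digits s n).length) ^ logb s x :=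
        (pow_rpow_logb (by positivity) hsR.ne' hx0 _).symm
    _ ≤ ((s : ℝ) * n) ^ logb s x := by
        gcongr
        · exact logb_nonneg hsR hx
        · exact_mod_cast Nat.base_pow_length_digits_le s n hs hn
    _ = x * (n : ℝ) ^ logb s x := by
        rw [mul_rpow (by positivity) (by positivity), rpow_logb (by positivity) hsR.ne' hx0]

end RpowLogb

section CantorInt

variable {p s : ℕ} (h : ℕ → ℕ)

lemma cantorInt_eq_ofDigits (n : ℕ) :
    cantorInt p s h n = Nat.ofDigits p ((Nat.digits s n).map h) :=
  List.foldr_add_mul_eq_ofDigits p h _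

lemma cantorInt_lt_pow_length_digits (hs : 1 < s) (hp : 1 < p) (hrange : ∀ i, i < s → h i < p)
    (n : ℕ) : cantorInt p s h n < p ^ (Nat.digits s n).length := by
  rw [cantorInt_eq_ofDigits, ← List.length_map h]
  refine Nat.ofDigits_lt_base_pow_length hp fun x hx => ?_
  obtain ⟨d, hd, rfl⟩ := List.mem_map.mp hx
  exact hrange d (Nat.digits_lt_base hs hd)

lemma pow_length_digits_le_mul_cantorInt (hs : 1 < s) (hp : 1 < p)
    (hzero : ∀ i, 0 < i → i < s → h i ≠ 0) {n : ℕ} (hn : n ≠ 0) :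
    p ^ (Nat.digits s n).length ≤ p * cantorInt p s h n := by
  have hne : Nat.digits s n ≠ [] := Nat.digits_ne_nil_iff_ne_zero.mpr hn
  have hlast : ((Nat.digits s n).map h).getLast (by simpa using hne) ≠ 0 := by
    rw [List.getLast_map]
    exact hzero _ (Nat.pos_of_ne_zero (Nat.getLast_digit_ne_zero s hn))
      (Nat.digits_lt_base hs (List.getLast_mem hne))
  obtain ⟨b, rfl⟩ : ∃ b, p = b + 2 := ⟨p - 2, by omega⟩
  simpa [cantorInt_eq_ofDigits] using Nat.pow_length_le_mul_ofDigits _ hlast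

lemma cantorB_le (hs : 1 < s) (hp : 1 < p) (hrange : ∀ i, i < s → h i < p) {n : ℕ}
    (hn : n ≠ 0) : cantorB p s h n ≤ p := by
  have hp1 : (1 : ℝ) ≤ p := by exact_mod_cast hp.le
  rw [cantorB, div_le_iff₀ (by positivity)]
  calc (cantorInt p s h n : ℝ) ≤ (p : ℝ) ^ (Nat.digits s n).length := by
        exact_mod_cast (cantorInt_lt_pow_length_digits h hs hp hrange n).le
    _ ≤ p * (n : ℝ) ^ logb s p := pow_length_digits_le_mul_natCast_rpow_logb hs hp1 hn

lemma inv_le_cantorB (hs : 1 < s) (hp : 1 < p) (hzero : ∀ i, 0 < i → i < s → h i ≠ 0)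
    {n : ℕ} (hn : n ≠ 0) : (p : ℝ)⁻¹ ≤ cantorB p s h n := by
  have hp1 : (1 : ℝ) ≤ p := by exact_mod_cast hp.le
  rw [cantorB, le_div_iff₀ (by positivity), inv_mul_le_iff₀ (by positivity)]
  calc (n : ℝ) ^ logb s p ≤ (p : ℝ) ^ (Nat.digits s n).length :=
        natCast_rpow_logb_le_pow_length_digits hs hp1 n
    _ ≤ p * cantorInt p s h n := by
        exact_mod_cast pow_length_digits_le_mul_cantorInt h hs hp hzero hn

end CantorInt

theorem stmt0 (p s : ℕ) (h : ℕ → ℕ) (hs : 2 ≤ s) (hp : s < p)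
    (hmono : ∀ i j, i < j → j < s → h i < h j)
    (hrange : ∀ i, i < s → h i < p) :
    ∃ c₁ c₂ : ℝ, 0 < c₁ ∧ c₁ ≤ c₂ ∧
      ∀ n : ℕ, 1 ≤ n → c₁ ≤ cantorB p s h n ∧ cantorB p s h n ≤ c₂ := by
  have hs1 : 1 < s := by omega
  have hp1 : 1 < p := by omega
  have hzero : ∀ i, 0 < i → i < s → h i ≠ 0 := fun i hi his =>
    Nat.pos_iff_ne_zero.mp ((Nat.zero_le _).trans_lt (hmono 0 i hi his))
  refine ⟨(p : ℝ)⁻¹, p, by positivity, ?_, fun n hn =>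
    ⟨inv_le_cantorB h hs1 hp1 hzero (by omega), cantorB_le h hs1 hp1 hrange (by omega)⟩⟩
  have hp1R : (1 : ℝ) ≤ p := by exact_mod_cast hp1.le
  exact (inv_le_one_of_one_le₀ hp1R).trans hp1R
end

section
/- Let b_n = a_n / n^{log_s p}. Then for all n ≥ 1, b_n ≤ b_{sn}, with equality for all n if and only if h(0) = 0. Moreover there exists N such that for all n > N, b_{sn+s-1} < b_{sn+s-2} < ... < b_{sn+1} < b_n. -/
open Real Filter Set MeasureTheory Topology
open scoped Classical ENNReal

/-! Appending an `s`-ary digit `i` to `n` gives `a (s n + i) = h i + p a n`, while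
`(s n) ^ log_s p = p n ^ log_s p`; hence `b (s n) = b n + h 0 / (s n) ^ log_s p`. Within a block
`s n + i`, consecutive values of `b` share the term `p a n` of their numerators and their digit terms
differ by less than `p`. Since `log_s p ≥ 1`, passing from `x` to `x + 1` multiplies the
denominator by at least `1 + 1 / x`, which wins as soon as `x ≤ a n`; and `a n ≥ p ^ ⌊log_s n⌋`
eventually exceeds `s n + s` because `p > s`. -/

lemma eventually_pow_add_le_pow {s p : ℕ} (hs : 0 < s) (hsp : s < p) (k : ℕ) :
    ∀ᶠ L in atTop, s ^ (L + k) ≤ p ^ L := by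
  have hs' : (0 : ℝ) < s := by exact_mod_cast hs
  have hratio : (1 : ℝ) < p / s := (one_lt_div hs').2 (by exact_mod_cast hsp)
  filter_upwards [(tendsto_pow_atTop_atTop_of_one_lt hratio).eventually_ge_atTop ((s : ℝ) ^ k)]
    with L hL
  rw [div_pow, le_div_iff₀ (by positivity), ← pow_add, add_comm k] at hL
  exact_mod_cast hL

lemma tendsto_nat_log_atTop {b : ℕ} (hb : 1 < b) : Tendsto (Nat.log b) atTop atTop :=
  tendsto_atTop_atTop.2 fun L => ⟨b ^ L, fun _ hn => Nat.le_log_of_pow_le hb hn⟩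

lemma add_div_rpow_add_one_lt {α x B c d : ℝ} (hα : 1 ≤ α) (hx : 0 < x) (hc : 0 ≤ c)
    (hd : 0 ≤ d) (hB : d * x < B) : (d + B) / (x + 1) ^ α < (c + B) / x ^ α := by
  have hy : 0 < x ^ (α - 1) := rpow_pos_of_pos hx _
  have hB0 : 0 ≤ B := (mul_nonneg hd hx.le).trans hB.le
  have hmono : x ^ (α - 1) ≤ (x + 1) ^ (α - 1) :=
    rpow_le_rpow hx.le (by linarith) (by linarith)
  have hsplit : ∀ z : ℝ, 0 < z → z ^ α = z ^ (α - 1) * z := fun z hz => by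
    rw [← rpow_add_one hz.ne', sub_add_cancel]
  rw [div_lt_div_iff₀ (by positivity) (by positivity), hsplit x hx, hsplit (x + 1) (by linarith)]
  calc (d + B) * (x ^ (α - 1) * x) < B * (x ^ (α - 1) * (x + 1)) := by nlinarith
    _ ≤ (c + B) * ((x + 1) ^ (α - 1) * (x + 1)) := by gcongr; linarith

lemma one_le_logb_of_lt {s p : ℕ} (hs : 1 < s) (hsp : s < p) : 1 ≤ logb s p := by
  rw [← logb_self_eq_one (b := s) (by exact_mod_cast hs)]
  exact logb_le_logb_of_le (by exact_mod_cast hs) (by positivity) (by exact_mod_cast hsp.le)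

lemma natCast_mul_rpow_logb {s p : ℕ} (hs : 1 < s) (hp : 0 < p) (n : ℕ) :
    ((s * n : ℕ) : ℝ) ^ logb s p = p * (n : ℝ) ^ logb s p := by
  have hs' : (1 : ℝ) < s := by exact_mod_cast hs
  rw [Nat.cast_mul, mul_rpow (by positivity) (by positivity),
    rpow_logb (by positivity) hs'.ne' (by exact_mod_cast hp)]

lemma add_mul_div_rpow_logb_add_one_lt {s p : ℕ} (hs : 1 < s) (hsp : s < p) {A c d x : ℕ}
    (hx : 0 < x) (hd : d < p) (hxA : x ≤ A) :
    (d + p * A) / ((x + 1 : ℕ) : ℝ) ^ logb s p < (c + p * A) / (x : ℝ) ^ logb s p := by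
  have hdx : d * x < p * A :=
    calc d * x < p * x := Nat.mul_lt_mul_of_pos_right hd hx
      _ ≤ p * A := Nat.mul_le_mul_left p hxA
  push_cast
  exact add_div_rpow_add_one_lt (one_le_logb_of_lt hs hsp) (by exact_mod_cast hx)
    (by positivity) (by positivity) (by exact_mod_cast hdx)

section Cantor

variable {p s : ℕ} {h : ℕ → ℕ}

lemma cantorInt_of_pos (hs : 1 < s) {n : ℕ} (hn : 0 < n) :
    cantorInt p s h n = h (n % s) + p * cantorInt p s h (n / s) := by
  rw [cantorInt, Nat.digits_def' hs hn, List.foldr_cons]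
  rfl

lemma cantorInt_mul_add (hs : 1 < s) {n i : ℕ} (hn : 0 < n) (hi : i < s) :
    cantorInt p s h (s * n + i) = h i + p * cantorInt p s h n := by
  rw [cantorInt_of_pos hs (by positivity), Nat.mul_add_mod, Nat.mod_eq_of_lt hi,
    Nat.mul_add_div (by omega), Nat.div_eq_of_lt hi, add_zero]

lemma pow_log_le_cantorInt (hs : 1 < s) (hpos : ∀ d, 0 < d → d < s → 0 < h d) :
    ∀ n, 0 < n → p ^ Nat.log s n ≤ cantorInt p s h n := by
  intro n
  induction n using Nat.strong_induction_on with
  | _ n ih =>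
    intro hn
    rw [cantorInt_of_pos hs hn]
    rcases lt_or_ge n s with hns | hsn
    · rw [Nat.log_of_lt hns, pow_zero, Nat.mod_eq_of_lt hns]
      have := hpos n hn hns
      omega
    · have hq : 0 < n / s := Nat.div_pos hsn (by omega)
      calc p ^ Nat.log s n = p * p ^ Nat.log s (n / s) := by
            rw [Nat.log_of_one_lt_of_le hs hsn, pow_succ']
        _ ≤ p * cantorInt p s h (n / s) :=
            Nat.mul_le_mul_left p (ih _ (Nat.div_lt_self hn hs) hq)
        _ ≤ _ := Nat.le_add_left _ _

lemma eventually_mul_add_le_cantorInt (hs : 1 < s) (hsp : s < p)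
    (hpos : ∀ d, 0 < d → d < s → 0 < h d) :
    ∀ᶠ n in atTop, s * n + s ≤ cantorInt p s h n := by
  filter_upwards [(tendsto_nat_log_atTop hs).eventually (eventually_pow_add_le_pow
    (by omega) hsp 2), eventually_gt_atTop 0] with n hlog hn
  calc s * n + s = s * (n + 1) := by ring
    _ ≤ s * s ^ (Nat.log s n + 1) := Nat.mul_le_mul_left s (Nat.lt_pow_succ_log_self hs n)
    _ = s ^ (Nat.log s n + 2) := by ring
    _ ≤ p ^ Nat.log s n := hlog
    _ ≤ cantorInt p s h n := pow_log_le_cantorInt hs hpos n hn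

lemma cantorB_eq_div_mul (hs : 1 < s) (hp : 0 < p) (n : ℕ) :
    cantorB p s h n = p * cantorInt p s h n / ((s * n : ℕ) : ℝ) ^ logb s p := by
  have hp' : (p : ℝ) ≠ 0 := by exact_mod_cast hp.ne'
  rw [cantorB, natCast_mul_rpow_logb hs hp, mul_div_mul_left _ _ hp']

lemma cantorB_mul_add (hs : 1 < s) {n i : ℕ} (hn : 0 < n) (hi : i < s) :
    cantorB p s h (s * n + i) =
      (h i + p * cantorInt p s h n) / ((s * n + i : ℕ) : ℝ) ^ logb s p := by
  rw [cantorB, cantorInt_mul_add hs hn hi]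
  push_cast
  rfl

lemma cantorB_mul (hs : 1 < s) (hp : 0 < p) {n : ℕ} (hn : 0 < n) :
    cantorB p s h (s * n) = cantorB p s h n + h 0 / ((s * n : ℕ) : ℝ) ^ logb s p := by
  have hdigit := cantorB_mul_add (p := p) (h := h) hs hn (i := 0) (by omega)
  rw [add_zero] at hdigit
  rw [cantorB_eq_div_mul hs hp n, ← add_div, add_comm, hdigit]

end Cantor

theorem stmt3 (p s : ℕ) (h : ℕ → ℕ) (hs : 2 ≤ s) (hp : s < p)
    (hmono : ∀ i j, i < j → j < s → h i < h j)
    (hrange : ∀ i, i < s → h i < p) :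
    (∀ n : ℕ, 1 ≤ n → cantorB p s h n ≤ cantorB p s h (s * n)) ∧
    ((∀ n : ℕ, 1 ≤ n → cantorB p s h n = cantorB p s h (s * n)) ↔ h 0 = 0) ∧
    (∃ N : ℕ, ∀ n : ℕ, N < n →
      (∀ i : ℕ, 1 ≤ i → i + 1 ≤ s - 1 →
        cantorB p s h (s * n + i + 1) < cantorB p s h (s * n + i)) ∧
      cantorB p s h (s * n + 1) < cantorB p s h n) := by
  have hs1 : 1 < s := hs
  have hp0 : 0 < p := by omega
  have hpos : ∀ d, 0 < d → d < s → 0 < h d := fun d hd hds =>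
    (hmono 0 d hd hds).trans_le' (Nat.zero_le _)
  obtain ⟨N, hN⟩ := eventually_atTop.1 (eventually_mul_add_le_cantorInt hs1 hp hpos)
  refine ⟨fun n hn => ?_, ⟨fun heq => ?_, fun h0 n hn => ?_⟩,
    ⟨max N 1, fun n hn => ⟨fun i _ hi => ?_, ?_⟩⟩⟩
  · rw [cantorB_mul hs1 hp0 hn]
    exact le_add_of_nonneg_right (by positivity)
  · have h1 := heq 1 Nat.one_pos
    rw [cantorB_mul hs1 hp0 Nat.one_pos, left_eq_add, div_eq_zero_iff] at h1
    exact_mod_cast h1.resolve_right (rpow_pos_of_pos (by positivity) _).ne'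
  · rw [cantorB_mul hs1 hp0 hn, h0, Nat.cast_zero, zero_div, add_zero]
  · have hn0 : 0 < n := by omega
    have hA := hN n (by omega)
    rw [add_assoc, cantorB_mul_add hs1 hn0 (by omega), cantorB_mul_add hs1 hn0 (by omega),
      ← add_assoc]
    exact_mod_cast add_mul_div_rpow_logb_add_one_lt hs1 hp (by positivity)
      (hrange _ (by omega)) (by omega : s * n + i ≤ cantorInt p s h n)
  · have hn0 : 0 < n := by omega
    have hA := hN n (by omega)
    have key := add_mul_div_rpow_logb_add_one_lt (c := 0) hs1 hp (by positivity : 0 < s * n)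
      (hrange 1 hs1) (by omega : s * n ≤ cantorInt p s h n)
    rwa [Nat.cast_zero, zero_add, ← cantorB_mul_add hs1 hn0 hs1, ← cantorB_eq_div_mul hs1 hp0]
      at key
end

section
/- The infimum m = inf{b_n : n ≥ 1} is not attained: b_n ≠ m for every n ≥ 1, and consequently m is an accumulation point of the sequence (b_n). -/
open Real Filter Set MeasureTheory Topology
open scoped Classical ENNReal

/-!
Writing `n` twice in a row in base `s` gives `n' = (1 + s^k) n`, where `k` is the number of
digits of `n`, and `a_{n'} = (1 + p^k) a_n`. With `α = log_s p > 1` we have `p^k = (s^k)^α`, and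
strict superadditivity of `x ↦ x^α` gives `1 + p^k < (1 + s^k)^α`, hence `b_{n'} < b_n`.
So every value of `b` is beaten by a later one: the infimum is not attained, and the terms
below `m + ε` form an infinite set, which makes `m` a cluster point.
-/

theorem Real.add_rpow_lt_rpow_add {p a b : ℝ} (ha : 0 < a) (hb : 0 < b) (hp : 1 < p) :
    a ^ p + b ^ p < (a + b) ^ p := by
  have hp' : 0 < p - 1 := sub_pos.2 hp
  have hab : 0 < a + b := add_pos ha hb
  calc a ^ p + b ^ p = a * a ^ (p - 1) + b * b ^ (p - 1) := by
        rw [mul_comm a, mul_comm b, ← rpow_add_one ha.ne', ← rpow_add_one hb.ne', sub_add_cancel]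
    _ < a * (a + b) ^ (p - 1) + b * (a + b) ^ (p - 1) := by
        gcongr <;> linarith
    _ = (a + b) ^ p := by
        rw [← add_mul, mul_comm, ← rpow_add_one hab.ne', sub_add_cancel]

theorem ne_sInf_image_of_forall_exists_lt {α β : Type*} [ConditionallyCompleteLattice β]
    {u : α → β} {S : Set α} (hbdd : BddBelow (u '' S))
    (hdesc : ∀ a ∈ S, ∃ a' ∈ S, u a' < u a) : ∀ a ∈ S, u a ≠ sInf (u '' S) := by
  intro a ha heq
  obtain ⟨a', ha', hlt⟩ := hdesc a ha
  exact (csInf_le hbdd (mem_image_of_mem u ha')).not_gt (heq ▸ hlt)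

theorem mapClusterPt_sInf_image_of_forall_exists_gt_lt {u : ℕ → ℝ} {S : Set ℕ}
    (hS : S.Nonempty) (hbdd : BddBelow (u '' S))
    (hdesc : ∀ n ∈ S, ∃ n' ∈ S, n < n' ∧ u n' < u n) :
    MapClusterPt (sInf (u '' S)) atTop u := by
  rw [Metric.nhds_basis_ball.mapClusterPt_iff_frequently]
  intro ε hε
  set m := sInf (u '' S)
  set A := {n | n ∈ S ∧ u n < m + ε}
  have hA : A.Nonempty := by
    obtain ⟨_, ⟨n, hn, rfl⟩, hlt⟩ := exists_lt_of_csInf_lt (hS.image u) (lt_add_of_pos_right m hε)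
    exact ⟨n, hn, hlt⟩
  have hAinf : A.Infinite := by
    intro hfin
    obtain ⟨i, ⟨hiS, hi⟩, hmax⟩ := hfin.exists_maximal hA
    obtain ⟨j, hjS, hij, hj⟩ := hdesc i hiS
    exact hij.not_ge (hmax ⟨hjS, hj.trans hi⟩ hij.le)
  refine (Nat.frequently_atTop_iff_infinite.2 hAinf).mono fun n ⟨hnS, hn⟩ => ?_
  rw [Metric.mem_ball, Real.dist_eq, abs_sub_lt_iff]
  constructor <;> linarith [csInf_le hbdd (mem_image_of_mem u hnS)]

section CantorInt

variable {p s : ℕ} {h : ℕ → ℕ}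

theorem foldr_horner_eq (L : List ℕ) (A : ℕ) :
    L.foldr (fun d acc => h d + p * acc) A
      = L.foldr (fun d acc => h d + p * acc) 0 + p ^ L.length * A := by
  induction L with
  | nil => simp
  | cons d L ih => simp only [List.foldr_cons, ih, List.length_cons, pow_succ]; ring

theorem cantorInt_add_pow_length_mul (hs : 0 < s) (m n : ℕ) :
    cantorInt p s h (m + s ^ (Nat.digits s m).length * n)
      = cantorInt p s h m + p ^ (Nat.digits s m).length * cantorInt p s h n := by
  rw [cantorInt, ← Nat.digits_append_digits hs, List.foldr_append, foldr_horner_eq]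
  rfl

theorem cantorInt_pos (hs : 1 < s) (hp : 0 < p) (hh : ∀ d, 0 < d → d < s → 0 < h d)
    {n : ℕ} (hn : 0 < n) : 0 < cantorInt p s h n := by
  induction n using Nat.strong_induction_on with
  | _ n ih =>
    rw [cantorInt, Nat.digits_def' hs hn, List.foldr_cons, ← cantorInt]
    rcases (n / s).eq_zero_or_pos with hq | hq
    · have hmod : n % s = n := by simpa [hq] using Nat.div_add_mod n s
      exact Nat.add_pos_left (hh _ (hmod.symm ▸ hn) (Nat.mod_lt n (by omega))) _
    · exact Nat.add_pos_right _ (Nat.mul_pos hp (ih _ (Nat.div_lt_self hn hs) hq))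

theorem cantorB_add_pow_length_mul_self_lt (hs : 1 < s) (hp : s < p) {n : ℕ}
    (ha : 0 < cantorInt p s h n) :
    cantorB p s h (n + s ^ (Nat.digits s n).length * n) < cantorB p s h n := by
  set k := (Nat.digits s n).length
  set α := logb s p
  have hs' : (1 : ℝ) < s := by exact_mod_cast hs
  have hp' : (0 : ℝ) < p := by exact_mod_cast (by omega : 0 < p)
  have hα : 1 < α := by
    rw [lt_logb_iff_rpow_lt hs' hp', rpow_one]
    exact_mod_cast hp
  have hsk : ((s : ℝ) ^ k) ^ α = (p : ℝ) ^ k := by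
    rw [← rpow_pow_comm (by positivity), rpow_logb (by positivity) hs'.ne' hp']
  have hsuper : 1 + (p : ℝ) ^ k < (1 + (s : ℝ) ^ k) ^ α := by
    simpa [hsk] using add_rpow_lt_rpow_add one_pos (pow_pos (zero_lt_one.trans hs') k) hα
  have hn : (0 : ℝ) < n := by
    have : n ≠ 0 := by rintro rfl; simp [cantorInt] at ha
    positivity
  have ha' : (0 : ℝ) < cantorInt p s h n := by exact_mod_cast ha
  rw [cantorB, cantorB, cantorInt_add_pow_length_mul (by omega)]
  push_cast
  rw [show (n : ℝ) + s ^ k * n = (1 + s ^ k) * n by ring, mul_rpow (by positivity) hn.le,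
    show (cantorInt p s h n : ℝ) + p ^ k * cantorInt p s h n
      = (1 + p ^ k) * cantorInt p s h n by ring,
    mul_div_mul_comm]
  exact mul_lt_of_lt_one_left (by positivity) ((div_lt_one (by positivity)).2 hsuper)

end CantorInt

theorem stmt4_general (p s : ℕ) (h : ℕ → ℕ) (hs : 2 ≤ s) (hp : s < p)
    (hmono : ∀ i j, i < j → j < s → h i < h j)
    (m : ℝ) (hm : m = sInf {x : ℝ | ∃ n : ℕ, 1 ≤ n ∧ cantorB p s h n = x}) :
    (∀ n : ℕ, 1 ≤ n → cantorB p s h n ≠ m) ∧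
    MapClusterPt m atTop (fun n : ℕ => cantorB p s h n) := by
  have hdesc : ∀ n ∈ Ici 1, ∃ n' ∈ Ici 1, n < n' ∧ cantorB p s h n' < cantorB p s h n := by
    intro n (hn : 1 ≤ n)
    have ha : 0 < cantorInt p s h n := cantorInt_pos (by omega) (by omega)
      (fun d hd hds => (hmono 0 d hd hds).trans_le' (Nat.zero_le _)) hn
    have hgrow : 0 < s ^ (Nat.digits s n).length * n := Nat.mul_pos (by positivity) hn
    exact ⟨_, by rw [mem_Ici]; omega, by omega,
      cantorB_add_pow_length_mul_self_lt (by omega) hp ha⟩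
  have hbdd : BddBelow (cantorB p s h '' Ici 1) :=
    ⟨0, by rintro _ ⟨n, -, rfl⟩; unfold cantorB; positivity⟩
  subst hm
  exact ⟨fun n hn => ne_sInf_image_of_forall_exists_lt hbdd
      (fun n hn => (hdesc n hn).imp fun _ hn' => ⟨hn'.1, hn'.2.2⟩) n hn,
    mapClusterPt_sInf_image_of_forall_exists_gt_lt ⟨1, le_refl 1⟩ hbdd hdesc⟩

theorem stmt4 (p s : ℕ) (h : ℕ → ℕ) (hs : 2 ≤ s) (hp : s < p)
    (hmono : ∀ i j, i < j → j < s → h i < h j)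
    (hrange : ∀ i, i < s → h i < p)
    (m : ℝ) (hm : m = sInf {x : ℝ | ∃ n : ℕ, 1 ≤ n ∧ cantorB p s h n = x}) :
    (∀ n : ℕ, 1 ≤ n → cantorB p s h n ≠ m) ∧
    MapClusterPt m atTop (fun n : ℕ => cantorB p s h n) :=
  stmt4_general p s h hs hp hmono m hm
end

section
/- For every γ ∈ (m, M) there exists an integer n₁ ≥ s^{k₀} such that b_{n₁+1} < γ ≤ b_{n₁}, where k₀ is any index beyond which the monotonicity b_{sn+s-1} < ... < b_{sn+1} < b_n ≤ b_{sn} holds for all n ≥ s^{k₀-1}. -/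
open Real Filter Set MeasureTheory Topology
open scoped Classical ENNReal

/-- Take the first index `k > n` with `b k < γ`; then `k - 1` is a down-crossing. -/
theorem exists_downcrossing_of_le_of_lt {α : Type*} [LinearOrder α] {b : ℕ → α} {γ : α}
    {n k : ℕ} (hn : γ ≤ b n) (hnk : n < k) (hk : b k < γ) :
    ∃ j, n ≤ j ∧ b (j + 1) < γ ∧ γ ≤ b j := by
  have hex : ∃ k, n < k ∧ b k < γ := ⟨k, hnk, hk⟩
  obtain ⟨hn_lt, hfirst⟩ := Nat.find_spec hex
  obtain ⟨j, hj⟩ : ∃ j, Nat.find hex = j + 1 := Nat.exists_eq_add_one.mpr (by omega)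
  refine ⟨j, by omega, hj ▸ hfirst, ?_⟩
  rcases (show n ≤ j by omega).eq_or_lt with rfl | hnj
  · exact hn
  · exact not_lt.mp fun hj_lt => Nat.find_min hex (by omega) ⟨hnj, hj_lt⟩

theorem exists_ge_downcrossing_of_frequently {α : Type*} [LinearOrder α] {b : ℕ → α} {γ : α}
    (hhi : ∃ᶠ n in atTop, γ ≤ b n) (hlo : ∃ᶠ n in atTop, b n < γ) (N : ℕ) :
    ∃ n, N ≤ n ∧ b (n + 1) < γ ∧ γ ≤ b n := by
  obtain ⟨n, hNn, hn⟩ := frequently_atTop.mp hhi N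
  obtain ⟨k, hnk, hk⟩ := frequently_atTop.mp hlo (n + 1)
  obtain ⟨j, hnj, hcross⟩ := exists_downcrossing_of_le_of_lt hn hnk hk
  exact ⟨j, hNn.trans hnj, hcross⟩

theorem stmt6_general (p s : ℕ) (h : ℕ → ℕ)
    (m M : ℝ)
    (hmacc : MapClusterPt m atTop (fun n : ℕ => cantorB p s h n))
    (hMacc : MapClusterPt M atTop (fun n : ℕ => cantorB p s h n))
    (k₀ : ℕ) :
    ∀ γ : ℝ, m < γ → γ < M →
      ∃ n₁ : ℕ, s ^ k₀ ≤ n₁ ∧ cantorB p s h (n₁ + 1) < γ ∧ γ ≤ cantorB p s h n₁ := by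
  intro γ hmγ hγM
  have hhi : ∃ᶠ n in atTop, γ ≤ cantorB p s h n :=
    (hMacc.frequently (eventually_gt_nhds hγM)).mono fun _ => le_of_lt
  have hlo : ∃ᶠ n in atTop, cantorB p s h n < γ := hmacc.frequently (eventually_lt_nhds hmγ)
  exact exists_ge_downcrossing_of_frequently hhi hlo (s ^ k₀)

theorem stmt6 (p s : ℕ) (h : ℕ → ℕ) (hs : 2 ≤ s) (hp : s < p)
    (hmono : ∀ i j, i < j → j < s → h i < h j)
    (hrange : ∀ i, i < s → h i < p)
    (m M : ℝ) (hm : m = sInf {x : ℝ | ∃ n : ℕ, 1 ≤ n ∧ cantorB p s h n = x})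
    (hM : M = sSup {x : ℝ | ∃ n : ℕ, 1 ≤ n ∧ cantorB p s h n = x})
    (hmacc : MapClusterPt m atTop (fun n : ℕ => cantorB p s h n))
    (hMacc : MapClusterPt M atTop (fun n : ℕ => cantorB p s h n))
    (k₀ : ℕ) (hk₀ : 1 ≤ k₀)
    (hmon : ∀ n : ℕ, s ^ (k₀ - 1) ≤ n →
      (∀ i : ℕ, 1 ≤ i → i + 1 ≤ s - 1 →
        cantorB p s h (s * n + i + 1) < cantorB p s h (s * n + i)) ∧
      cantorB p s h (s * n + 1) < cantorB p s h n ∧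
      cantorB p s h n ≤ cantorB p s h (s * n)) :
    ∀ γ : ℝ, m < γ → γ < M →
      ∃ n₁ : ℕ, s ^ k₀ ≤ n₁ ∧ cantorB p s h (n₁ + 1) < γ ∧ γ ≤ cantorB p s h n₁ :=
  stmt6_general p s h m M hmacc hMacc k₀
end

section
/- The function λ is continuous from the right at every x > 0, and continuous from the left at every x > 0 that is s-ary irrational (i.e., whose s-ary expansion is not eventually zero). -/
open Real Filter Set MeasureTheory Topology
open scoped Classical ENNReal

/-! Write `θ = log_s p` and `μ(x) = λ(x) x^θ`; since `(s^k)^θ = p^k`,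
`μ(x) = lim_k a(s^k x) / p^k`. The recursion `a_{sn+d} = h(d) + p a_n` with `h(d) < p` gives
`p^k a_n ≤ a_m < p^k (a_n + 1)` whenever `m / s^k = n`, so on each `s`-adic interval
`[N/s^K, (N+1)/s^K)` the function `μ` takes values in `[a_N/p^K, (a_N+1)/p^K]`. Every `x > 0` lies
in such an interval together with a right neighbourhood, and a non-`s`-adic `x` together with a
full neighbourhood; so `μ`, and with it `λ = μ / x^θ`, is continuous from those sides. -/

section CantorInt

variable {p s : ℕ} {h : ℕ → ℕ}

theorem cantorInt_zero : cantorInt p s h 0 = 0 := by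
  simp [cantorInt]

theorem cantorInt_of_ne_zero (hs : 1 < s) {n : ℕ} (hn : n ≠ 0) :
    cantorInt p s h n = h (n % s) + p * cantorInt p s h (n / s) := by
  simp [cantorInt, Nat.digits_def' hs (Nat.pos_of_ne_zero hn)]

theorem cantorInt_div_bounds (hs : 1 < s) (hrange : ∀ i, i < s → h i < p) (n : ℕ) :
    p * cantorInt p s h (n / s) ≤ cantorInt p s h n ∧
      cantorInt p s h n < p * (cantorInt p s h (n / s) + 1) := by
  rcases eq_or_ne n 0 with rfl | hn
  · simpa [cantorInt_zero] using Nat.zero_lt_of_lt (hrange 0 (by omega))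
  · have := hrange (n % s) (Nat.mod_lt n (by omega))
    rw [cantorInt_of_ne_zero hs hn]
    constructor <;> nlinarith

theorem cantorInt_div_pow_bounds (hs : 1 < s) (hrange : ∀ i, i < s → h i < p) (n k : ℕ) :
    p ^ k * cantorInt p s h (n / s ^ k) ≤ cantorInt p s h n ∧
      cantorInt p s h n < p ^ k * (cantorInt p s h (n / s ^ k) + 1) := by
  induction k with
  | zero => simp
  | succ k ih =>
    obtain ⟨hlo, hhi⟩ := cantorInt_div_bounds hs hrange (n / s ^ k)
    rw [pow_succ, pow_succ, ← Nat.div_div_eq_div_mul]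
    constructor
    · calc p ^ k * p * cantorInt p s h (n / s ^ k / s)
          = p ^ k * (p * cantorInt p s h (n / s ^ k / s)) := by ring
        _ ≤ p ^ k * cantorInt p s h (n / s ^ k) := Nat.mul_le_mul_left _ hlo
        _ ≤ cantorInt p s h n := ih.1
    · calc cantorInt p s h n < p ^ k * (cantorInt p s h (n / s ^ k) + 1) := ih.2
        _ ≤ p ^ k * (p * (cantorInt p s h (n / s ^ k / s) + 1)) := Nat.mul_le_mul_left _ hhi
        _ = p ^ k * p * (cantorInt p s h (n / s ^ k / s) + 1) := by ring

theorem cantorA_pow_mul_bounds (hs : 1 < s) (hrange : ∀ i, i < s → h i < p) (z : ℝ) (k : ℕ) :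
    (p : ℝ) ^ k * cantorA p s h z ≤ cantorA p s h ((s : ℝ) ^ k * z) ∧
      cantorA p s h ((s : ℝ) ^ k * z) ≤ (p : ℝ) ^ k * (cantorA p s h z + 1) := by
  have hfloor : ⌊(s : ℝ) ^ k * z⌋₊ / s ^ k = ⌊z⌋₊ := by
    rw [← Nat.floor_div_natCast, Nat.cast_pow,
      mul_div_cancel_left₀ _ (pow_ne_zero k (by positivity))]
  obtain ⟨hlo, hhi⟩ := cantorInt_div_pow_bounds hs hrange ⌊(s : ℝ) ^ k * z⌋₊ k
  rw [hfloor] at hlo hhi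
  unfold cantorA
  exact ⟨by exact_mod_cast hlo, by exact_mod_cast hhi.le⟩

end CantorInt

theorem rpow_logb_natCast_pow {s p : ℕ} (hs : 1 < s) (hp : 0 < p) (k : ℕ) :
    ((s : ℝ) ^ k) ^ logb s p = (p : ℝ) ^ k := by
  have hs0 : (0 : ℝ) < s := by positivity
  rw [← rpow_natCast, ← rpow_mul hs0.le, mul_comm, rpow_mul hs0.le,
    rpow_logb hs0 (by exact_mod_cast hs.ne') (by exact_mod_cast hp), rpow_natCast]

section Limit

variable {p s : ℕ} {h : ℕ → ℕ}

theorem tendsto_cantorA_div_pow {x L : ℝ} (hs : 1 < s) (hp : 0 < p) (hx : 0 < x)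
    (hL : Tendsto (fun k : ℕ => cantorA p s h ((s : ℝ) ^ k * x) / ((s : ℝ) ^ k * x) ^ logb s p)
      atTop (𝓝 L)) :
    Tendsto (fun k : ℕ => cantorA p s h ((s : ℝ) ^ k * x) / (p : ℝ) ^ k) atTop
      (𝓝 (L * x ^ logb s p)) := by
  refine (hL.mul_const (x ^ logb s p)).congr fun k => ?_
  have hxθ : x ^ logb s p ≠ 0 := (rpow_pos_of_pos hx _).ne'
  rw [mul_rpow (by positivity) hx.le, rpow_logb_natCast_pow hs hp]
  field_simp

theorem mul_rpow_logb_mem_Icc {x L : ℝ} (hs : 1 < s) (hrange : ∀ i, i < s → h i < p) (hx : 0 < x)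
    (hL : Tendsto (fun k : ℕ => cantorA p s h ((s : ℝ) ^ k * x) / ((s : ℝ) ^ k * x) ^ logb s p)
      atTop (𝓝 L)) (K : ℕ) :
    L * x ^ logb s p ∈ Icc (cantorA p s h ((s : ℝ) ^ K * x) / (p : ℝ) ^ K)
      ((cantorA p s h ((s : ℝ) ^ K * x) + 1) / (p : ℝ) ^ K) := by
  have hp : 0 < p := Nat.zero_lt_of_lt (hrange 0 (by omega))
  have hpk : ∀ k : ℕ, (0 : ℝ) < (p : ℝ) ^ k := fun k => by positivity
  refine isClosed_Icc.mem_of_tendsto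
    ((tendsto_cantorA_div_pow hs hp hx hL).comp (tendsto_add_atTop_nat K))
    (Eventually.of_forall fun k => ?_)
  obtain ⟨hlo, hhi⟩ := cantorA_pow_mul_bounds (h := h) hs hrange ((s : ℝ) ^ K * x) k
  simp only [Function.comp_apply, pow_add, mul_assoc]
  constructor
  · rw [div_le_div_iff₀ (hpk K) (mul_pos (hpk k) (hpk K))]
    nlinarith [hpk K]
  · rw [div_le_div_iff₀ (mul_pos (hpk k) (hpk K)) (hpk K)]
    nlinarith [hpk K]

theorem tendsto_lam_mul_rpow_logb {lam : ℝ → ℝ} (hs : 1 < s) (hp : 1 < p)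
    (hrange : ∀ i, i < s → h i < p)
    (hlam : ∀ x : ℝ, 0 < x →
      Tendsto (fun k : ℕ => cantorA p s h ((s : ℝ) ^ k * x) / ((s : ℝ) ^ k * x) ^ logb s p)
        atTop (𝓝 (lam x)))
    {x : ℝ} (hx : 0 < x) (l : Filter ℝ)
    (hfloor : ∀ K : ℕ, ∀ᶠ y in l, 0 < y ∧ ⌊(s : ℝ) ^ K * y⌋₊ = ⌊(s : ℝ) ^ K * x⌋₊) :
    Tendsto (fun y => lam y * y ^ logb s p) l (𝓝 (lam x * x ^ logb s p)) := by
  refine Metric.tendsto_nhds.2 fun ε hε => ?_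
  obtain ⟨K, hK⟩ := exists_pow_lt_of_lt_one hε (inv_lt_one_of_one_lt₀ (Nat.one_lt_cast.2 hp))
  filter_upwards [hfloor K] with y ⟨hy, hfl⟩
  have hIx := mul_rpow_logb_mem_Icc hs hrange hx (hlam x hx) K
  have hIy := mul_rpow_logb_mem_Icc hs hrange hy (hlam y hy) K
  rw [cantorA, hfl, ← cantorA] at hIy
  calc dist (lam y * y ^ logb s p) (lam x * x ^ logb s p)
      ≤ (cantorA p s h ((s : ℝ) ^ K * x) + 1) / (p : ℝ) ^ K
        - cantorA p s h ((s : ℝ) ^ K * x) / (p : ℝ) ^ K :=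
        abs_sub_le_of_le_of_le hIy.1 hIy.2 hIx.1 hIx.2
    _ = ((p : ℝ)⁻¹) ^ K := by rw [inv_pow]; ring
    _ < ε := hK

end Limit

theorem eventually_nhdsGE_natFloor_mul_eq {c : ℝ} (hc : 0 ≤ c) (z : ℝ) :
    ∀ᶠ y in 𝓝[≥] z, ⌊c * y⌋₊ = ⌊c * z⌋₊ := by
  have hlt : ∀ᶠ y in 𝓝[≥] z, c * y < ((⌊c * z⌋₊ + 1 : ℕ) : ℝ) :=
    nhdsWithin_le_nhds <| ((continuous_const_mul c).tendsto z).eventually_lt_const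
      (by exact_mod_cast Nat.lt_floor_add_one (c * z))
  filter_upwards [self_mem_nhdsWithin, hlt] with y (hzy : z ≤ y) hy
  have := Nat.floor_le_floor (mul_le_mul_of_nonneg_left hzy hc)
  have := (Nat.floor_lt' (Nat.succ_ne_zero _)).2 hy
  omega

theorem eventually_nhds_natFloor_mul_eq {c z : ℝ} (hcz : (⌊c * z⌋₊ : ℝ) < c * z) :
    ∀ᶠ y in 𝓝 z, ⌊c * y⌋₊ = ⌊c * z⌋₊ := by
  have hcont := (continuous_const_mul c).tendsto z
  filter_upwards [hcont.eventually_const_lt hcz,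
    hcont.eventually_lt_const (Nat.lt_floor_add_one (c * z))] with y hlo hhi
  have := Nat.le_floor hlo.le
  have := (Nat.floor_lt' (Nat.succ_ne_zero _)).2 (by exact_mod_cast hhi)
  omega

theorem natFloor_pow_mul_lt {s : ℕ} (hs : s ≠ 0) {x : ℝ} (hx : 0 ≤ x)
    (hirr : ¬ ∃ a k : ℕ, x = (a : ℝ) / (s : ℝ) ^ k) (K : ℕ) :
    (⌊(s : ℝ) ^ K * x⌋₊ : ℝ) < (s : ℝ) ^ K * x := by
  refine (Nat.floor_le (by positivity)).lt_of_ne fun heq => hirr ⟨⌊(s : ℝ) ^ K * x⌋₊, K, ?_⟩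
  rw [heq, mul_div_cancel_left₀ _ (pow_ne_zero K (by exact_mod_cast hs))]

theorem continuousWithinAt_of_mul_rpow {f : ℝ → ℝ} {t : Set ℝ} {x θ : ℝ} (hx : 0 < x)
    (hf : ContinuousWithinAt (fun y => f y * y ^ θ) t x) : ContinuousWithinAt f t x := by
  have hquot : ContinuousWithinAt (fun y => f y * y ^ θ / y ^ θ) t x :=
    hf.div (continuousAt_rpow_const x θ (Or.inl hx.ne')).continuousWithinAt
      (rpow_pos_of_pos hx θ).ne'
  refine hquot.congr_of_eventuallyEq ?_ (by field_simp [(rpow_pos_of_pos hx θ).ne'])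
  filter_upwards [nhdsWithin_le_nhds (lt_mem_nhds hx)] with y hy
  field_simp [(rpow_pos_of_pos hy θ).ne']

theorem stmt9_general (p s : ℕ) (h : ℕ → ℕ) (hs : 2 ≤ s) (hp : s < p)
    (hrange : ∀ i, i < s → h i < p)
    (lam : ℝ → ℝ)
    (hlam : ∀ x : ℝ, 0 < x →
      Tendsto (fun k : ℕ => cantorA p s h ((s : ℝ) ^ k * x) / ((s : ℝ) ^ k * x) ^ Real.logb s p)
        atTop (nhds (lam x))) :
    ∀ x : ℝ, 0 < x →
      ContinuousWithinAt lam (Set.Ici x) x ∧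
      ((¬ ∃ a k : ℕ, x = (a : ℝ) / (s : ℝ) ^ k) → ContinuousWithinAt lam (Set.Iic x) x) := by
  intro x hx
  have hμ := tendsto_lam_mul_rpow_logb (by omega) (by omega) hrange hlam hx
  have hpos : ∀ᶠ y in 𝓝 x, 0 < y := lt_mem_nhds hx
  refine ⟨continuousWithinAt_of_mul_rpow hx (hμ _ fun K => ?_),
    fun hirr => continuousWithinAt_of_mul_rpow hx (hμ _ fun K => ?_)⟩
  · exact (hpos.filter_mono nhdsWithin_le_nhds).and
      (eventually_nhdsGE_natFloor_mul_eq (by positivity) x)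
  · exact nhdsWithin_le_nhds
      (hpos.and (eventually_nhds_natFloor_mul_eq (natFloor_pow_mul_lt (by omega) hx.le hirr K)))

theorem stmt9 (p s : ℕ) (h : ℕ → ℕ) (hs : 2 ≤ s) (hp : s < p)
    (hmono : ∀ i j, i < j → j < s → h i < h j)
    (hrange : ∀ i, i < s → h i < p)
    (lam : ℝ → ℝ)
    (hlam : ∀ x : ℝ, 0 < x →
      Tendsto (fun k : ℕ => cantorA p s h ((s : ℝ) ^ k * x) / ((s : ℝ) ^ k * x) ^ Real.logb s p)
        atTop (nhds (lam x))) :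
    ∀ x : ℝ, 0 < x →
      ContinuousWithinAt lam (Set.Ici x) x ∧
      ((¬ ∃ a k : ℕ, x = (a : ℝ) / (s : ℝ) ^ k) → ContinuousWithinAt lam (Set.Iic x) x) :=
  stmt9_general p s h hs hp hrange lam hlam
end

section
/- For every α ∈ [m, M], the level set S_α = {x > 0 : λ(x) = α} has Lebesgue measure zero. -/
open Real Filter Set MeasureTheory Topology
open scoped Classical ENNReal

/-! Put `θ = log_s p > 1` and `F x = λ x * x ^ θ = lim a(⌊s^j x⌋) / p^j`. The leading digits of
`⌊s^j x⌋` are those of `N = ⌊s^k x⌋`, so `F x ∈ [a_N / p^k, (a_N + 1) / p^k]`: `F` varies by at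
most `p^(-k)` on each `s`-adic interval of length `s^(-k)`. On the level set `λ = α`, where
`α ≥ m ≥ 1/p > 0`, we have `F x = α x^θ`, and on `[c, R]` with `c > 0` the map `x ↦ x^θ` expands
distances by at least `c^(θ-1)`. So the level set meets each of the `≈ R s^k` intervals in a set of
diameter `O(p^(-k))`, and its measure is `O((s/p)^k) → 0`. -/

lemma mul_abs_sub_le_abs_rpow_sub_rpow {θ c x y : ℝ} (hθ : 1 ≤ θ) (hc : 0 < c) (hx : c ≤ x)
    (hy : c ≤ y) : c ^ (θ - 1) * |x - y| ≤ |x ^ θ - y ^ θ| := by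
  wlog hxy : x ≤ y generalizing x y
  · rw [abs_sub_comm, abs_sub_comm (x ^ θ)]
    exact this hy hx (le_of_not_ge hxy)
  have hx0 : 0 < x := hc.trans_le hx
  have hcx : c ^ (θ - 1) ≤ x ^ (θ - 1) := Real.rpow_le_rpow hc.le hx (by linarith)
  have hxy' : x ^ (θ - 1) ≤ y ^ (θ - 1) := Real.rpow_le_rpow hx0.le hxy (by linarith)
  have hsplit : ∀ z : ℝ, 0 < z → z ^ θ = z ^ (θ - 1) * z := fun z hz => by
    rw [← Real.rpow_add_one hz.ne', sub_add_cancel]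
  rw [abs_sub_comm, abs_of_nonneg (sub_nonneg.2 hxy), abs_sub_comm,
    abs_of_nonneg (sub_nonneg.2 (Real.rpow_le_rpow hx0.le hxy (by linarith))),
    hsplit x hx0, hsplit y (hx0.trans_le hxy)]
  nlinarith

lemma volume_le_of_floor_eq_imp_abs_sub_le {S : Set ℝ} {R b d : ℝ} (hS : S ⊆ Icc 0 R)
    (hb : 0 ≤ b) (hd : 0 ≤ d) (hcell : ∀ x ∈ S, ∀ y ∈ S, ⌊b * x⌋₊ = ⌊b * y⌋₊ → |x - y| ≤ d) :
    volume S ≤ ENNReal.ofReal ((b * R + 1) * d) := by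
  rcases S.eq_empty_or_nonempty with rfl | ⟨x₀, hx₀⟩
  · simp
  have hR : 0 ≤ R := (hS hx₀).1.trans (hS hx₀).2
  let cell : ℕ → Set ℝ := fun N => S ∩ {x | ⌊b * x⌋₊ = N}
  have hcover : S ⊆ ⋃ N ∈ Finset.range (⌊b * R⌋₊ + 1), cell N := fun x hx => by
    have hle : ⌊b * x⌋₊ ≤ ⌊b * R⌋₊ :=
      Nat.floor_le_floor (mul_le_mul_of_nonneg_left (hS hx).2 hb)
    exact mem_biUnion (Finset.mem_range.2 (Nat.lt_succ_of_le hle)) ⟨hx, rfl⟩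
  have hcell_vol : ∀ N, volume (cell N) ≤ ENNReal.ofReal d := fun N =>
    (Real.volume_le_diam _).trans <| Metric.ediam_le fun x hx y hy => by
      rw [edist_dist, Real.dist_eq]
      exact ENNReal.ofReal_le_ofReal (hcell x hx.1 y hy.1 (hx.2.trans hy.2.symm))
  calc volume S ≤ ∑ N ∈ Finset.range (⌊b * R⌋₊ + 1), volume (cell N) :=
        (measure_mono hcover).trans (measure_biUnion_finset_le _ _)
    _ ≤ ∑ N ∈ Finset.range (⌊b * R⌋₊ + 1), ENNReal.ofReal d :=
        Finset.sum_le_sum fun N _ => hcell_vol N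
    _ = ENNReal.ofReal ((⌊b * R⌋₊ + 1 : ℕ) * d) := by
        rw [Finset.sum_const, Finset.card_range, nsmul_eq_mul,
          ENNReal.ofReal_mul (by positivity), ENNReal.ofReal_natCast]
    _ ≤ ENNReal.ofReal ((b * R + 1) * d) := by
        refine ENNReal.ofReal_le_ofReal (mul_le_mul_of_nonneg_right ?_ hd)
        push_cast
        linarith [Nat.floor_le (mul_nonneg hb hR)]

lemma volume_eq_zero_of_floor_eq_imp_abs_sub_le {S : Set ℝ} {R b : ℝ} {δ : ℕ → ℝ}
    (hS : S ⊆ Icc 0 R) (hb : 1 ≤ b) (hδ : ∀ k, 0 ≤ δ k)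
    (hlim : Tendsto (fun k => b ^ k * δ k) atTop (𝓝 0))
    (hcell : ∀ k, ∀ x ∈ S, ∀ y ∈ S, ⌊b ^ k * x⌋₊ = ⌊b ^ k * y⌋₊ → |x - y| ≤ δ k) :
    volume S = 0 := by
  have hδlim : Tendsto δ atTop (𝓝 0) :=
    squeeze_zero hδ (fun k => le_mul_of_one_le_left (hδ k) (one_le_pow₀ hb)) hlim
  have hbound_lim : Tendsto (fun k => (b ^ k * R + 1) * δ k) atTop (𝓝 0) := by
    have := (hlim.const_mul R).add hδlim
    rw [mul_zero, add_zero] at this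
    exact this.congr fun k => by ring
  have hvol_lim := ENNReal.tendsto_ofReal hbound_lim
  rw [ENNReal.ofReal_zero] at hvol_lim
  refine le_antisymm (ge_of_tendsto hvol_lim (Eventually.of_forall fun k => ?_)) zero_le
  exact volume_le_of_floor_eq_imp_abs_sub_le hS (by positivity) (hδ k) (hcell k)

lemma measure_eq_zero_of_forall_inter_Icc {μ : Measure ℝ} {E : Set ℝ} (hE : E ⊆ Ioi 0)
    (h : ∀ c R : ℝ, 0 < c → μ (E ∩ Icc c R) = 0) : μ E = 0 := by
  have hcover : E ⊆ ⋃ n : ℕ, E ∩ Icc ((n + 1 : ℝ)⁻¹) (n + 1) := fun x hx => by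
    have hx0 : 0 < x := hE hx
    obtain ⟨n, hn⟩ := exists_nat_ge (max x x⁻¹)
    refine mem_iUnion.2 ⟨n, hx, inv_le_of_inv_le₀ hx0 ?_, ?_⟩ <;>
      linarith [le_max_left x x⁻¹, le_max_right x x⁻¹]
  exact measure_mono_null hcover (measure_iUnion_null fun n => h _ _ (by positivity))

namespace CantorInt

variable {p s : ℕ} {h : ℕ → ℕ}

@[simp]
lemma cantorInt_zero : cantorInt p s h 0 = 0 := by
  simp [cantorInt]

lemma cantorInt_of_pos (hs : 1 < s) {n : ℕ} (hn : 0 < n) :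
    cantorInt p s h n = h (n % s) + p * cantorInt p s h (n / s) := by
  simp [cantorInt, Nat.digits_def' hs hn]

lemma cantorInt_of_lt {d : ℕ} (hd : 0 < d) (hds : d < s) : cantorInt p s h d = h d := by
  simp [cantorInt, Nat.digits_of_lt s d hd.ne' hds]

lemma pow_mul_cantorInt_div_pow_le (hs : 1 < s) (r n : ℕ) :
    p ^ r * cantorInt p s h (n / s ^ r) ≤ cantorInt p s h n := by
  induction r generalizing n with
  | zero => simp
  | succ r ih =>
    rcases Nat.eq_zero_or_pos n with rfl | hn
    · simp
    have hdiv : n / s ^ (r + 1) = n / s / s ^ r := by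
      rw [pow_succ', Nat.div_div_eq_div_mul]
    calc p ^ (r + 1) * cantorInt p s h (n / s ^ (r + 1))
        = p * (p ^ r * cantorInt p s h (n / s / s ^ r)) := by rw [hdiv, pow_succ']; ring
      _ ≤ p * cantorInt p s h (n / s) := Nat.mul_le_mul_left p (ih (n / s))
      _ ≤ cantorInt p s h n := by rw [cantorInt_of_pos hs hn]; omega

lemma cantorInt_lt_pow_mul_succ (hs : 1 < s) (hrange : ∀ d < s, h d < p) (r n : ℕ) :
    cantorInt p s h n < p ^ r * (cantorInt p s h (n / s ^ r) + 1) := by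
  induction r generalizing n with
  | zero => simp
  | succ r ih =>
    have hp : 0 < p := (Nat.zero_le _).trans_lt (hrange 0 (by omega))
    rcases Nat.eq_zero_or_pos n with rfl | hn
    · simp [hp]
    have hdiv : n / s ^ (r + 1) = n / s / s ^ r := by
      rw [pow_succ', Nat.div_div_eq_div_mul]
    have hdigit := hrange (n % s) (Nat.mod_lt n (by omega))
    have hmul : p * cantorInt p s h (n / s) + p
        ≤ p * (p ^ r * (cantorInt p s h (n / s / s ^ r) + 1)) :=
      Nat.mul_le_mul_left p (ih (n / s))
    rw [cantorInt_of_pos hs hn, hdiv, pow_succ', mul_assoc]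
    omega

lemma pow_log_le_cantorInt (hs : 1 < s) (hpos : ∀ d, 0 < d → d < s → 0 < h d) {n : ℕ}
    (hn : n ≠ 0) : p ^ Nat.log s n ≤ cantorInt p s h n := by
  set r := Nat.log s n
  have hlead : 0 < n / s ^ r := Nat.div_pos (Nat.pow_log_le_self s hn) (by positivity)
  have hlead' : n / s ^ r < s := by
    rw [Nat.div_lt_iff_lt_mul (by positivity), ← pow_succ']
    exact Nat.lt_pow_succ_log_self hs n
  calc p ^ r = p ^ r * 1 := (mul_one _).symm
    _ ≤ p ^ r * cantorInt p s h (n / s ^ r) := by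
      rw [cantorInt_of_lt hlead hlead']
      exact Nat.mul_le_mul_left _ (hpos _ hlead hlead')
    _ ≤ cantorInt p s h n := pow_mul_cantorInt_div_pow_le hs r n

lemma one_le_logb (hs : 1 < s) (hsp : s ≤ p) : 1 ≤ logb s p := by
  have hs' : (1 : ℝ) < s := by exact_mod_cast hs
  rw [Real.le_logb_iff_rpow_le hs' (by norm_cast; omega), Real.rpow_one]
  exact_mod_cast hsp

lemma pow_rpow_logb (hs : 1 < s) (hp : 0 < p) (j : ℕ) :
    ((s : ℝ) ^ j) ^ logb s p = (p : ℝ) ^ j := by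
  have hs' : (1 : ℝ) < s := by exact_mod_cast hs
  rw [← Real.rpow_pow_comm (by positivity), Real.rpow_logb (by positivity) hs'.ne'
    (by exact_mod_cast hp)]

lemma inv_le_cantorB (hs : 1 < s) (hsp : s ≤ p) (hpos : ∀ d, 0 < d → d < s → 0 < h d)
    {n : ℕ} (hn : n ≠ 0) : (p : ℝ)⁻¹ ≤ cantorB p s h n := by
  have hp : 0 < p := by omega
  set r := Nat.log s n
  have hn_le : (n : ℝ) ≤ (s : ℝ) ^ (r + 1) := by
    exact_mod_cast (Nat.lt_pow_succ_log_self hs n).le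
  have hn0 : (0 : ℝ) < n := by exact_mod_cast Nat.pos_of_ne_zero hn
  rw [cantorB, le_div_iff₀ (Real.rpow_pos_of_pos hn0 _)]
  calc (p : ℝ)⁻¹ * (n : ℝ) ^ logb s p ≤ (p : ℝ)⁻¹ * (p : ℝ) ^ (r + 1) := by
        rw [← pow_rpow_logb hs hp]
        gcongr
        linarith [one_le_logb hs hsp]
    _ = (p : ℝ) ^ r := by field_simp; ring
    _ ≤ cantorInt p s h n := by exact_mod_cast pow_log_le_cantorInt hs hpos hn

/-- The sequence whose limit is `λ x`. -/
noncomputable def lamSeq (p s : ℕ) (h : ℕ → ℕ) (x : ℝ) (k : ℕ) : ℝ :=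
  cantorA p s h ((s : ℝ) ^ k * x) / ((s : ℝ) ^ k * x) ^ logb s p

lemma tendsto_cantorInt_floor_div_pow (hs : 1 < s) (hp : 0 < p) {x l : ℝ} (hx : 0 < x)
    (hl : Tendsto (lamSeq p s h x) atTop (𝓝 l)) :
    Tendsto (fun j : ℕ => (cantorInt p s h ⌊(s : ℝ) ^ j * x⌋₊ : ℝ) / (p : ℝ) ^ j) atTop
      (𝓝 (l * x ^ logb s p)) := by
  refine (hl.mul_const _).congr fun j => ?_
  have hxθ : 0 < x ^ logb s p := Real.rpow_pos_of_pos hx _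
  rw [lamSeq, cantorA, Real.mul_rpow (by positivity) hx.le, pow_rpow_logb hs hp]
  field_simp

lemma mul_rpow_logb_mem_Icc (hs : 1 < s) (hrange : ∀ d < s, h d < p) {x l : ℝ} (hx : 0 < x)
    (hl : Tendsto (lamSeq p s h x) atTop (𝓝 l)) (k : ℕ) :
    l * x ^ logb s p ∈ Icc ((cantorInt p s h ⌊(s : ℝ) ^ k * x⌋₊ : ℝ) / (p : ℝ) ^ k)
      ((cantorInt p s h ⌊(s : ℝ) ^ k * x⌋₊ + 1 : ℝ) / (p : ℝ) ^ k) := by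
  have hp : 0 < p := (Nat.zero_le _).trans_lt (hrange 0 (by omega))
  refine isClosed_Icc.mem_of_tendsto (tendsto_cantorInt_floor_div_pow hs hp hx hl)
    ((eventually_ge_atTop k).mono fun j hj => ?_)
  obtain ⟨r, rfl⟩ : ∃ r, j = k + r := ⟨j - k, by omega⟩
  set n := ⌊(s : ℝ) ^ (k + r) * x⌋₊
  have hlead : n / s ^ r = ⌊(s : ℝ) ^ k * x⌋₊ := by
    rw [← Nat.floor_div_natCast]
    push_cast
    rw [pow_add, mul_right_comm, mul_div_cancel_right₀ _ (by positivity)]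
  have hlow : ((p ^ r * cantorInt p s h (n / s ^ r) : ℕ) : ℝ) ≤ cantorInt p s h n := by
    exact_mod_cast pow_mul_cantorInt_div_pow_le hs r n
  have hup : (cantorInt p s h n : ℝ) ≤ ((p ^ r * (cantorInt p s h (n / s ^ r) + 1) : ℕ) : ℝ) := by
    exact_mod_cast (cantorInt_lt_pow_mul_succ hs hrange r n).le
  rw [hlead] at hlow hup
  push_cast at hlow hup
  have hpr : (0 : ℝ) < (p : ℝ) ^ r := by positivity
  have hpk : (0 : ℝ) < (p : ℝ) ^ k := by positivity
  rw [pow_add]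
  constructor
  · rw [div_le_div_iff₀ hpk (by positivity)]
    nlinarith
  · rw [div_le_div_iff₀ (by positivity) hpk]
    nlinarith

lemma abs_sub_mul_rpow_logb_le (hs : 1 < s) (hrange : ∀ d < s, h d < p) {x y lx ly : ℝ}
    (hx : 0 < x) (hy : 0 < y) (hlx : Tendsto (lamSeq p s h x) atTop (𝓝 lx))
    (hly : Tendsto (lamSeq p s h y) atTop (𝓝 ly)) {k : ℕ}
    (hxy : ⌊(s : ℝ) ^ k * x⌋₊ = ⌊(s : ℝ) ^ k * y⌋₊) :
    |lx * x ^ logb s p - ly * y ^ logb s p| ≤ ((p : ℝ) ^ k)⁻¹ := by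
  have hFx := mul_rpow_logb_mem_Icc hs hrange hx hlx k
  have hFy := mul_rpow_logb_mem_Icc hs hrange hy hly k
  rw [hxy] at hFx
  simp only [mem_Icc, add_div, one_div] at hFx hFy
  rw [abs_sub_le_iff]
  constructor <;> linarith

lemma volume_levelSet_inter_Icc_eq_zero {lam : ℝ → ℝ} (hs : 1 < s) (hp : s < p)
    (hrange : ∀ d < s, h d < p)
    (hlam : ∀ x : ℝ, 0 < x → Tendsto (lamSeq p s h x) atTop (𝓝 (lam x)))
    {α c R : ℝ} (hα : 0 < α) (hc : 0 < c) :
    volume ({x : ℝ | 0 < x ∧ lam x = α} ∩ Icc c R) = 0 := by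
  have hθ : 1 ≤ logb s p := one_le_logb hs hp.le
  have hp0 : (0 : ℝ) < p := by exact_mod_cast (show 0 < p by omega)
  set C := α * c ^ (logb s p - 1)
  have hC : 0 < C := by positivity
  refine volume_eq_zero_of_floor_eq_imp_abs_sub_le (b := s) (δ := fun k => ((p : ℝ) ^ k)⁻¹ / C)
    (fun x hx => ⟨hc.le.trans hx.2.1, hx.2.2⟩) (by exact_mod_cast hs.le) (fun k => by positivity)
    ?_ ?_
  · have hratio := (tendsto_pow_atTop_nhds_zero_of_lt_one (r := (s : ℝ) / p) (by positivity)
      ((div_lt_one hp0).2 (by exact_mod_cast hp))).div_const C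
    rw [zero_div] at hratio
    exact hratio.congr fun k => by rw [div_pow]; ring
  · rintro k x ⟨⟨hx, hlx⟩, hcx, -⟩ y ⟨⟨hy, hly⟩, hcy, -⟩ hxy
    have hF := abs_sub_mul_rpow_logb_le hs hrange hx hy (hlam x hx) (hlam y hy) hxy
    rw [hlx, hly, ← mul_sub, abs_mul, abs_of_pos hα] at hF
    rw [le_div_iff₀ hC]
    calc |x - y| * C = α * (c ^ (logb s p - 1) * |x - y|) := by ring
      _ ≤ α * |x ^ logb s p - y ^ logb s p| := by
          gcongr
          exact mul_abs_sub_le_abs_rpow_sub_rpow hθ hc hcx hcy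
      _ ≤ _ := hF

end CantorInt

theorem stmt12_general (p s : ℕ) (h : ℕ → ℕ) (hs : 2 ≤ s) (hp : s < p)
    (hmono : ∀ i j, i < j → j < s → h i < h j)
    (hrange : ∀ i, i < s → h i < p)
    (m M : ℝ) (hm : m = sInf {x : ℝ | ∃ n : ℕ, 1 ≤ n ∧ cantorB p s h n = x})
    (lam : ℝ → ℝ)
    (hlam : ∀ x : ℝ, 0 < x →
      Tendsto (fun k : ℕ => cantorA p s h ((s : ℝ) ^ k * x) / ((s : ℝ) ^ k * x) ^ Real.logb s p)
        atTop (nhds (lam x))) :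
    ∀ α ∈ Set.Icc m M, volume {x : ℝ | 0 < x ∧ lam x = α} = 0 := by
  intro α hα
  have hpos : ∀ d, 0 < d → d < s → 0 < h d := fun d hd hds =>
    (Nat.zero_le _).trans_lt (hmono 0 d hd hds)
  have hm_ge : (p : ℝ)⁻¹ ≤ m := hm ▸ le_csInf ⟨_, 1, le_rfl, rfl⟩ (by
    rintro _ ⟨n, hn, rfl⟩
    exact CantorInt.inv_le_cantorB hs hp.le hpos (by omega))
  have hp0 : (0 : ℝ) < p := by exact_mod_cast (show 0 < p by omega)
  have hα0 : 0 < α := (inv_pos.2 hp0).trans_le (hm_ge.trans hα.1)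
  exact measure_eq_zero_of_forall_inter_Icc (fun x hx => hx.1) fun c R hc =>
    CantorInt.volume_levelSet_inter_Icc_eq_zero hs hp hrange hlam hα0 hc

theorem stmt12 (p s : ℕ) (h : ℕ → ℕ) (hs : 2 ≤ s) (hp : s < p)
    (hmono : ∀ i j, i < j → j < s → h i < h j)
    (hrange : ∀ i, i < s → h i < p)
    (m M : ℝ) (hm : m = sInf {x : ℝ | ∃ n : ℕ, 1 ≤ n ∧ cantorB p s h n = x})
    (hM : M = sSup {x : ℝ | ∃ n : ℕ, 1 ≤ n ∧ cantorB p s h n = x})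
    (lam : ℝ → ℝ)
    (hlam : ∀ x : ℝ, 0 < x →
      Tendsto (fun k : ℕ => cantorA p s h ((s : ℝ) ^ k * x) / ((s : ℝ) ^ k * x) ^ Real.logb s p)
        atTop (nhds (lam x))) :
    ∀ α ∈ Set.Icc m M, volume {x : ℝ | 0 < x ∧ lam x = α} = 0 :=
  stmt12_general p s h hs hp hmono hrange m M hm lam hlam
end
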